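/- Let N be a Hilbert C*-module over A and Y ⊆ N⁰ ⊆ N a subset that is bounded with respect to every seminorm ν_{X,Φ}(x) = sup_k (Σ_{i≥k}|φ_k(⟨x,x_i⟩)|²)^{1/2}, where X = (x_i) ranges over N⁰-admissible systems in N (countable families with ‖x_i‖ ≤ 1 such that for each x ∈ N⁰ the series Σ_i ⟨x,x_i⟩⟨x_i,x⟩ converges with partial sums bounded by ⟨x,x⟩) and Φ = (φ_k) over sequences of states on A. Then Y is bounded in norm. -/

import Mathlib

open scoped ComplexOrder RightActions InnerProductSpace MultiplierAlgebra
open Filter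

noncomputable section

/-- The `CStarModule` class as it stood in the older Mathlib: a right Hilbert C⋆-module,
with `A` acting on the right through `Aᵐᵒᵖ`. -/
class RightCStarModule (A : outParam <| Type*) (E : Type*) [NonUnitalSemiring A] [StarRing A]
    [Module ℂ A] [AddCommGroup E] [Module ℂ E] [PartialOrder A] [SMul Aᵐᵒᵖ E] [Norm A] [Norm E]
    extends Inner A E where
  inner_add_right {x} {y} {z} : inner x (y + z) = inner x y + inner x z
  inner_self_nonneg {x} : 0 ≤ inner x x
  inner_self {x} : inner x x = 0 ↔ x = 0
  inner_op_smul_right {a : A} {x y : E} : inner x (y <• a) = inner x y * a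
  inner_smul_right_complex {z : ℂ} {x} {y} : inner x (z • y) = z • inner x y
  star_inner x y : star (inner x y) = inner y x
  norm_eq_sqrt_norm_inner_self x : ‖x‖ = √‖inner x x‖

variable {A : Type*} [NonUnitalCStarAlgebra A] [PartialOrder A] [StarOrderedRing A]

/-- A state on a C⋆-algebra: a positive continuous linear functional of norm one. -/
def IsState (φ : A →L[ℂ] ℂ) : Prop :=
  (∀ a : A, 0 ≤ φ (star a * a)) ∧ ‖φ‖ = 1

variable {E : Type*} [NormedAddCommGroup E] [NormedSpace ℂ E] [SMul Aᵐᵒᵖ E] [RightCStarModule A E]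

/-- `f : E → A` is `A`-linear; together with continuity and `ℂ`-linearity this says that `f`
is a bounded `A`-linear functional on the Hilbert C⋆-module `E`. -/
def IsALinear (f : E →L[ℂ] A) : Prop := ∀ (x : E) (a : A), f (x <• a) = f x * a

/-- A `*`-`N⁰`-admissible system of `A`-linear functionals: each has norm at most one, and for
every `x ∈ N⁰` the series `Σᵢ (fᵢ x)* (fᵢ x)` is norm convergent with partial sums bounded by
`⟪x, x⟫`. -/
def StarAdmissible (N0 : Set E) (f : ℕ → E →L[ℂ] A) : Prop :=
  (∀ i, IsALinear (f i)) ∧ (∀ i, ‖f i‖ ≤ 1) ∧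
    ∀ x ∈ N0, (∀ n : ℕ, ∑ i ∈ Finset.range n, star (f i x) * f i x ≤ ⟪x, x⟫_A) ∧
      Summable fun i => star (f i x) * f i x

/-- An `N⁰`-admissible system of elements of `E`: each has norm at most one and for every
`x ∈ N⁰` the series `Σᵢ ⟪x, xᵢ⟫⟪xᵢ, x⟫` converges with partial sums bounded by `⟪x, x⟫`. -/
def Admissible (N0 : Set E) (X : ℕ → E) : Prop :=
  (∀ i, ‖X i‖ ≤ 1) ∧
    ∀ x ∈ N0, (∀ n : ℕ, ∑ i ∈ Finset.range n, ⟪x, X i⟫_A * ⟪X i, x⟫_A ≤ ⟪x, x⟫_A) ∧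
      Summable fun i => ⟪x, X i⟫_A * ⟪X i, x⟫_A

/-- The pseudometric `d_{F,Φ}` associated with a system of functionals `f` and a sequence of
states `Φ`: `d_{F,Φ}(x,y)² = sup_k Σ_{i ≥ k} |φ_k (f_i (x - y))|²`. -/
def dF (f : ℕ → E →L[ℂ] A) (Φ : ℕ → A →L[ℂ] ℂ) (x y : E) : ℝ :=
  Real.sqrt (⨆ k : ℕ, ∑' i : ℕ, ‖Φ k (f (k + i) (x - y))‖ ^ 2)

/-- The pseudometric `d_{X,Φ}` associated with a system of elements `X` and a sequence of
states `Φ`: `d_{X,Φ}(x,y)² = sup_k Σ_{i ≥ k} |φ_k ⟪x - y, x_i⟫|²`. -/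
def dX (X : ℕ → E) (Φ : ℕ → A →L[ℂ] ℂ) (x y : E) : ℝ :=
  Real.sqrt (⨆ k : ℕ, ∑' i : ℕ, ‖Φ k (⟪x - y, X (k + i)⟫_A)‖ ^ 2)

/-- `Y` is totally bounded w.r.t. the pseudometric `d`: for each `ε > 0` there is a finite
`ε`-net in `Y` consisting of elements of `Y`. -/
def TotBddWrt (Y : Set E) (d : E → E → ℝ) : Prop :=
  ∀ ε > (0 : ℝ), ∃ t : Finset E, ↑t ⊆ Y ∧ ∀ y ∈ Y, ∃ z ∈ t, d z y < ε

/-- An operator `g : A → E` is adjointable, with adjoint an `A`-functional `gs` on `E`: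
`⟪g a, x⟫ = ⟪a, gs x⟫_A = a* ⬝ gs x`. -/
def AdjFromA (g : A →L[ℂ] E) : Prop :=
  ∃ gs : E →L[ℂ] A, ∀ (a : A) (x : E), ⟪g a, x⟫_A = star a * gs x

/-- An `A`-functional `h : A → A` is adjointable: there is `hs : A → A` with
`⟪hs a, b⟫ = ⟪a, h b⟫`, i.e. `(hs a)* b = a* (h b)`. -/
def AdjFunctional (h : A →L[ℂ] A) : Prop :=
  ∃ hs : A →L[ℂ] A, ∀ a b : A, star (hs a) * b = star a * h b

/-- A functional `f : E → A` is locally adjointable if for every adjointable `A`-linear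
operator `g : A → E` the composition `f ∘ g : A → A` is an adjointable functional. -/
def LocAdj (f : E →L[ℂ] A) : Prop :=
  ∀ g : A →L[ℂ] E, (∀ a b : A, g (a * b) = g a <• b) → AdjFromA g →
    AdjFunctional (f.comp g)

/-- A functional `f : E → A` is represented by a (modular) multiplier of `E`: for every
`a ∈ A` the functional `x ↦ a* (f x)` is represented by an element of `E` (this encodes
`f ⬝ a ∈ E ⊆ M(E)`, using `E = M(E)A`). -/
def OuterRepr (f : E →L[ℂ] A) : Prop :=
  ∀ a : A, ∃ z : E, ∀ y : E, star a * f y = ⟪z, y⟫_A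

/-- The Hilbert C⋆-module `E` is countably generated: there is a sequence whose set of
`A`-linear combinations is dense. -/
def CountGen (A : Type*) (E : Type*) [NonUnitalCStarAlgebra A] [PartialOrder A]
    [StarOrderedRing A] [NormedAddCommGroup E] [NormedSpace ℂ E] [SMul Aᵐᵒᵖ E]
    [RightCStarModule A E] : Prop :=
  ∃ g : ℕ → E,
    closure (↑(Submodule.span ℂ (Set.range g ∪ {y | ∃ i, ∃ a : A, y = g i <• a})) : Set E)
      = Set.univ

/-- `F : M → E` is `A`-compact: it is a norm limit of finite sums of the elementary operators
`x ↦ y ⬝ ⟪z, x⟫`. -/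
def ACompact {M : Type*} [NormedAddCommGroup M] [NormedSpace ℂ M] [SMul Aᵐᵒᵖ M]
    [RightCStarModule A M] (F : M →L[ℂ] E) : Prop :=
  ∀ ε > (0 : ℝ), ∃ (n : ℕ) (y : Fin n → E) (z : Fin n → M),
    ∀ x : M, ‖F x - ∑ i, y i <• ⟪z i, x⟫_A‖ ≤ ε * ‖x‖

/-!
If `Y` were unbounded, pick `y k ∈ Y` with `‖y k‖ > k 2^(k+1)` and states `φ k` with
`φ k ⟪y k, y k⟫ = ‖y k‖²` (Hahn–Banach in the unitization: a functional with `‖g‖ = g 1 = 1` is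
positive). The system `x i = y i / (2^(i+1) ‖y i‖)` is admissible for every `N⁰`, by the
Cauchy–Schwarz inequality `⟪x, x i⟫⟪x i, x⟫ ≤ ‖x i‖² ⟪x, x⟫` and `Σ ‖x i‖² ≤ 1`; yet the `k`-th
term alone gives `ν_{X,Φ}(y k) ≥ |φ k ⟪y k, x k⟫| = ‖y k‖ / 2^(k+1) > k`.
-/

namespace RightCStarModule

variable {x y z : E}

section

omit [StarOrderedRing A]

lemma inner_sub_right : ⟪x, y - z⟫_A = ⟪x, y⟫_A - ⟪x, z⟫_A := by
  rw [eq_sub_iff_add_eq, ← inner_add_right, sub_add_cancel]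

lemma inner_sub_left : ⟪x - y, z⟫_A = ⟪x, z⟫_A - ⟪y, z⟫_A := by
  rw [← star_inner z, inner_sub_right, star_sub, star_inner, star_inner]

lemma inner_zero_right : ⟪x, (0 : E)⟫_A = 0 := by
  simpa using inner_sub_right (A := A) (x := x) (y := 0) (z := 0)

lemma inner_op_smul_left {a : A} : ⟪x <• a, y⟫_A = star a * ⟪x, y⟫_A := by
  rw [← star_inner y, inner_op_smul_right, star_mul, star_inner]

lemma inner_real_smul_right {r : ℝ} : ⟪x, r • y⟫_A = r • ⟪x, y⟫_A := by
  rw [← Complex.coe_smul, inner_smul_right_complex, Complex.coe_smul]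

lemma inner_real_smul_left {r : ℝ} : ⟪r • x, y⟫_A = r • ⟪x, y⟫_A := by
  rw [← star_inner y, inner_real_smul_right, star_smul, star_trivial, star_inner]

lemma norm_sq_eq_norm_inner_self : ‖x‖ ^ 2 = ‖⟪x, x⟫_A‖ := by
  rw [norm_eq_sqrt_norm_inner_self x, Real.sq_sqrt (norm_nonneg _)]

end

lemma inner_mul_inner_swap_le : ⟪x, y⟫_A * ⟪y, x⟫_A ≤ ‖y‖ ^ 2 • ⟪x, x⟫_A := by
  rcases eq_or_ne y 0 with rfl | hy
  · simp [inner_zero_right]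
  set t := ‖y‖ ^ 2 with ht
  have hconj : ⟪x, y⟫_A * (⟪y, y⟫_A * ⟪y, x⟫_A) ≤ t • (⟪x, y⟫_A * ⟪y, x⟫_A) := by
    rw [ht, norm_sq_eq_norm_inner_self, ← mul_assoc, ← star_inner y x]
    exact CStarAlgebra.star_left_conjugate_le_norm_smul (hb := star_inner y y)
  have key : 0 ≤ t • (t • ⟪x, x⟫_A) - t • (⟪x, y⟫_A * ⟪y, x⟫_A) := calc
    (0 : A) ≤ ⟪y <• ⟪y, x⟫_A - t • x, y <• ⟪y, x⟫_A - t • x⟫_A := inner_self_nonneg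
    _ = ⟪x, y⟫_A * (⟪y, y⟫_A * ⟪y, x⟫_A) - t • (⟪x, y⟫_A * ⟪y, x⟫_A)
          - t • (⟪x, y⟫_A * ⟪y, x⟫_A) + t • (t • ⟪x, x⟫_A) := by
      simp only [inner_sub_right, inner_sub_left, inner_op_smul_right, inner_op_smul_left,
        inner_real_smul_left, inner_real_smul_right, star_inner, sub_mul, smul_mul_assoc,
        mul_assoc, smul_sub]
      abel
    _ ≤ t • (t • ⟪x, x⟫_A) - t • (⟪x, y⟫_A * ⟪y, x⟫_A) := by
      rw [← sub_nonneg]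
      convert sub_nonneg.mpr hconj using 1
      abel
  rwa [sub_nonneg, smul_le_smul_iff_of_pos_left (by positivity)] at key

lemma norm_inner_le : ‖⟪x, y⟫_A‖ ≤ ‖x‖ * ‖y‖ := by
  have hsq : ‖⟪x, y⟫_A‖ ^ 2 ≤ (‖x‖ * ‖y‖) ^ 2 := calc
    ‖⟪x, y⟫_A‖ ^ 2 = ‖⟪x, y⟫_A * ⟪y, x⟫_A‖ := by
      rw [← star_inner x y, CStarRing.norm_self_mul_star, pow_two]
    _ ≤ ‖‖y‖ ^ 2 • ⟪x, x⟫_A‖ := by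
      refine CStarAlgebra.norm_le_norm_of_nonneg_of_le ?_ inner_mul_inner_swap_le
      rw [← star_inner x y]
      exact mul_star_self_nonneg _
    _ = (‖x‖ * ‖y‖) ^ 2 := by
      rw [norm_smul, ← norm_sq_eq_norm_inner_self, Real.norm_of_nonneg (by positivity)]
      ring
  exact pow_le_pow_iff_left₀ (norm_nonneg _) (by positivity) two_ne_zero |>.mp hsq

end RightCStarModule

lemma Complex.eq_one_of_add_eq_two {u v : ℂ} (hu : ‖u‖ ≤ 1) (hv : ‖v‖ ≤ 1) (huv : u + v = 2) :
    u = 1 := by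
  have h2 : ‖u + v‖ = 2 := by simp [huv]
  have hnu : ‖u‖ = 1 := by linarith [norm_add_le u v]
  have hnv : ‖v‖ = 1 := by linarith [norm_add_le u v]
  have heq : u = v :=
    eq_of_norm_eq_of_norm_add_eq (hnu.trans hnv.symm) (by rw [h2, hnu, hnv]; norm_num)
  subst heq
  linear_combination huv / 2

namespace StrongDual

variable {B : Type*} [CStarAlgebra B] {g : StrongDual ℂ B}

lemma im_apply_eq_zero_of_isSelfAdjoint (hg : ‖g‖ ≤ 1) (hg1 : g 1 = 1) {b : B}
    (hb : IsSelfAdjoint b) : (g b).im = 0 := by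
  have : Nontrivial B := ⟨1, 0, fun h => by simp [h] at hg1⟩
  -- `‖b + i t‖² = ‖b² + t²‖ ≤ ‖b‖² + t²` for real `t`, which forces `Im (g b) = 0`
  have key (t : ℝ) : (g b).im ^ 2 + 2 * (g b).im * t ≤ ‖b‖ ^ 2 := by
    set w : B := b + algebraMap ℂ B (t * Complex.I)
    have hstar : star w * w = b * b + algebraMap ℂ B (t ^ 2) := by
      have hc : star ((t : ℂ) * Complex.I) = -(t * Complex.I) := by simp [Complex.conj_ofReal]
      simp only [w, star_add, hb.star_eq, ← algebraMap_star_comm, hc, map_neg, add_mul, mul_add,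
        Algebra.commutes, neg_mul, ← map_mul]
      have hsq : (t : ℂ) * Complex.I * (t * Complex.I) = -(t ^ 2) := by
        ring_nf; simp [Complex.I_sq]
      rw [hsq, map_neg, neg_neg]
      abel
    have hw : ‖w‖ ^ 2 ≤ ‖b‖ ^ 2 + t ^ 2 := calc
      ‖w‖ ^ 2 = ‖b * b + algebraMap ℂ B (t ^ 2)‖ := by
        rw [← hstar, CStarRing.norm_star_mul_self, pow_two]
      _ ≤ ‖b‖ * ‖b‖ + ‖(t : ℂ) ^ 2‖ := (norm_add_le _ _).trans
        (add_le_add (norm_mul_le _ _) (norm_algebraMap' B _).le)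
      _ = ‖b‖ ^ 2 + t ^ 2 := by simp [sq]
    have hgw : g w = g b + t * Complex.I := by
      simp [w, Algebra.algebraMap_eq_smul_one, hg1]
    have hgw_le : ‖g w‖ ^ 2 ≤ ‖w‖ ^ 2 := by
      gcongr
      exact (g.le_opNorm w).trans (mul_le_of_le_one_left (norm_nonneg _) hg)
    rw [hgw, Complex.sq_norm, Complex.normSq_apply] at hgw_le
    simp only [Complex.add_re, Complex.add_im, Complex.mul_re, Complex.mul_im, Complex.ofReal_re,
      Complex.ofReal_im, Complex.I_re, Complex.I_im] at hgw_le
    nlinarith [sq_nonneg (g b).re]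
  by_contra hne
  have := key (‖b‖ ^ 2 / (2 * (g b).im))
  rw [mul_div_cancel₀ _ (by positivity)] at this
  exact hne (pow_eq_zero_iff two_ne_zero |>.mp (by nlinarith [sq_nonneg (g b).im]))

lemma apply_nonneg_of_nonneg [PartialOrder B] [StarOrderedRing B] (hg : ‖g‖ ≤ 1) (hg1 : g 1 = 1)
    {b : B} (hb : 0 ≤ b) : 0 ≤ g b := by
  have hre : (g b).im = 0 := im_apply_eq_zero_of_isSelfAdjoint hg hg1 hb.isSelfAdjoint
  have : Nontrivial B := ⟨1, 0, fun h => by simp [h] at hg1⟩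
  -- `0 ≤ ‖b‖ - b ≤ ‖b‖`, so `g b` lies in the disc of radius `‖b‖` around `‖b‖`
  have hdisc : ‖(‖b‖ : ℂ) - g b‖ ≤ ‖b‖ := by
    have hle : ‖algebraMap ℝ B ‖b‖ - b‖ ≤ ‖b‖ := by
      refine (CStarAlgebra.norm_le_norm_of_nonneg_of_le
        (sub_nonneg.mpr hb.isSelfAdjoint.le_algebraMap_norm_self) (sub_le_self _ hb)).trans ?_
      simp
    have hg_alg : g (algebraMap ℝ B ‖b‖) = ‖b‖ := by
      simp [Algebra.algebraMap_eq_smul_one, ← Complex.coe_smul, hg1]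
    rw [← hg_alg, ← map_sub]
    exact (g.le_opNorm _).trans (mul_le_of_le_one_left (norm_nonneg _) hg) |>.trans hle
  have hre_le := (Complex.abs_re_le_norm _).trans hdisc
  rw [Complex.sub_re, Complex.ofReal_re, abs_le] at hre_le
  exact Complex.nonneg_iff.mpr ⟨by linarith [hre_le.2], hre.symm⟩

lemma exists_apply_one_eq_one_apply_eq_one [PartialOrder B] [StarOrderedRing B] [Nontrivial B]
    {q : B} (hq : 0 ≤ q) (hq1 : ‖q‖ = 1) : ∃ g : StrongDual ℂ B, ‖g‖ = 1 ∧ g 1 = 1 ∧ g q = 1 := by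
  -- `2 ∈ σ(1 + q)` gives `‖1 + q‖ = 2`, so a norming functional of `1 + q` is `1` at both summands
  have h2 : ‖1 + q‖ = 2 := by
    refine le_antisymm ((norm_add_le _ _).trans (by simp [hq1]; norm_num)) ?_
    have hspec : (1 + 1 : ℝ) ∈ spectrum ℝ (algebraMap ℝ B 1 + q) :=
      spectrum.add_mem_add_iff.mpr (hq1 ▸ CStarAlgebra.norm_mem_spectrum_of_nonneg hq)
    simpa [one_add_one_eq_two] using spectrum.norm_le_norm_of_mem hspec
  obtain ⟨g, hg, hgx⟩ := exists_dual_vector ℂ (1 + q) (by rw [h2]; norm_num)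
  have hbound (b : B) : ‖g b‖ ≤ ‖b‖ := (g.le_opNorm b).trans (by rw [hg, one_mul])
  have hsum : g 1 + g q = 2 := by rw [← map_add, hgx, h2]; norm_num
  have hg1 := Complex.eq_one_of_add_eq_two (by simpa using hbound 1) (hq1 ▸ hbound q) hsum
  exact ⟨g, hg, hg1, by linear_combination hsum - hg1⟩

end StrongDual

theorem exists_isState_apply_eq_norm {p : A} (hp : 0 ≤ p) (hp0 : p ≠ 0) :
    ∃ φ : A →L[ℂ] ℂ, IsState φ ∧ φ p = ‖p‖ := by
  have hpn : 0 < ‖p‖ := norm_pos_iff.mpr hp0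
  set q : Unitization ℂ A := ((‖p‖⁻¹ • p : A) : Unitization ℂ A)
  have hq : 0 ≤ q := Unitization.inr_nonneg_iff.mpr (smul_nonneg (by positivity) hp)
  have hq1 : ‖q‖ = 1 := by
    rw [Unitization.norm_inr, norm_smul, norm_inv, norm_norm, inv_mul_cancel₀ hpn.ne']
  obtain ⟨g, hg, hg1, hgq⟩ := StrongDual.exists_apply_one_eq_one_apply_eq_one hq hq1
  set φ : A →L[ℂ] ℂ := g.comp ⟨Unitization.inrHom ℂ ℂ A, Unitization.continuous_inr⟩
  have hφ (a : A) : φ a = g a := rfl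
  have hφp : φ p = ‖p‖ := by
    have hpq : (p : Unitization ℂ A) = (‖p‖ : ℂ) • q := by
      rw [← Unitization.inr_smul, Complex.coe_smul, smul_inv_smul₀ hpn.ne']
    simp [hφ, hpq, hgq]
  refine ⟨φ, ⟨fun a => ?_, le_antisymm ?_ ?_⟩, hφp⟩
  · simpa [hφ] using StrongDual.apply_nonneg_of_nonneg hg.le hg1
      (Unitization.inr_nonneg_iff.mpr (star_mul_self_nonneg a))
  · refine φ.opNorm_le_bound zero_le_one fun a => ?_
    simpa [hφ, hg, Unitization.norm_inr] using g.le_opNorm (a : Unitization ℂ A)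
  · have := φ.le_opNorm p
    rw [hφp, Complex.norm_real, norm_norm] at this
    exact (le_mul_iff_one_le_left hpn).mp this

open RightCStarModule

lemma admissible_of_tsum_norm_sq_le_one {N0 : Set E} {X : ℕ → E}
    (hX : Summable fun i => ‖X i‖ ^ 2) (hX1 : ∑' i, ‖X i‖ ^ 2 ≤ 1) : Admissible N0 X := by
  refine ⟨fun i => ?_, fun x _ => ⟨fun n => ?_, ?_⟩⟩
  · exact (sq_le_one_iff₀ (norm_nonneg _)).mp ((hX.le_tsum i fun j _ => by positivity).trans hX1)
  · calc ∑ i ∈ Finset.range n, ⟪x, X i⟫_A * ⟪X i, x⟫_A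
        ≤ ∑ i ∈ Finset.range n, ‖X i‖ ^ 2 • ⟪x, x⟫_A :=
          Finset.sum_le_sum fun i _ => inner_mul_inner_swap_le
      _ = (∑ i ∈ Finset.range n, ‖X i‖ ^ 2) • ⟪x, x⟫_A := (Finset.sum_smul ..).symm
      _ ≤ (1 : ℝ) • ⟪x, x⟫_A := by
          gcongr
          · exact inner_self_nonneg
          · exact (hX.sum_le_tsum _ fun i _ => by positivity).trans hX1
      _ = ⟪x, x⟫_A := one_smul ..
  · refine .of_norm <| .of_nonneg_of_le (fun _ => norm_nonneg _) (fun i => ?_)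
      (hX.mul_left (‖x‖ ^ 2))
    calc ‖⟪x, X i⟫_A * ⟪X i, x⟫_A‖ ≤ (‖x‖ * ‖X i‖) * (‖X i‖ * ‖x‖) := (norm_mul_le _ _).trans
          (mul_le_mul norm_inner_le norm_inner_le (norm_nonneg _) (by positivity))
      _ = ‖x‖ ^ 2 * ‖X i‖ ^ 2 := by ring

lemma norm_apply_inner_le_dX {X : ℕ → E} {Φ : ℕ → A →L[ℂ] ℂ} (hΦ : ∀ k, ‖Φ k‖ ≤ 1)
    (hX : Summable fun i => ‖X i‖ ^ 2) (y : E) (k : ℕ) : ‖Φ k ⟪y, X k⟫_A‖ ≤ dX X Φ y 0 := by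
  have hterm (j i : ℕ) : ‖Φ j ⟪y, X (j + i)⟫_A‖ ^ 2 ≤ ‖y‖ ^ 2 * ‖X (j + i)‖ ^ 2 := by
    rw [← mul_pow]
    gcongr
    exact ((Φ j).le_opNorm _).trans (mul_le_of_le_one_left (norm_nonneg _) (hΦ j)) |>.trans
      norm_inner_le
  have htail (j : ℕ) : Summable fun i => ‖X (j + i)‖ ^ 2 :=
    hX.comp_injective (add_right_injective j)
  have hsum (j : ℕ) : Summable fun i => ‖Φ j ⟪y, X (j + i)⟫_A‖ ^ 2 :=
    .of_nonneg_of_le (fun _ => by positivity) (hterm j) ((htail j).mul_left _)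
  have hbdd : BddAbove (Set.range fun j => ∑' i, ‖Φ j ⟪y, X (j + i)⟫_A‖ ^ 2) := by
    refine ⟨‖y‖ ^ 2 * ∑' i, ‖X i‖ ^ 2, Set.forall_mem_range.mpr fun j => ?_⟩
    calc ∑' i, ‖Φ j ⟪y, X (j + i)⟫_A‖ ^ 2 ≤ ∑' i, ‖y‖ ^ 2 * ‖X (j + i)‖ ^ 2 :=
          (hsum j).tsum_le_tsum (hterm j) ((htail j).mul_left _)
      _ ≤ ‖y‖ ^ 2 * ∑' i, ‖X i‖ ^ 2 := by
          rw [tsum_mul_left]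
          exact mul_le_mul_of_nonneg_left
            (tsum_comp_le_tsum_of_inj hX (fun _ => by positivity) (add_right_injective j))
            (by positivity)
  have hk : ‖Φ k ⟪y, X k⟫_A‖ ^ 2 ≤ ∑' i, ‖Φ k ⟪y, X (k + i)⟫_A‖ ^ 2 := by
    simpa using (hsum k).le_tsum 0 fun _ _ => by positivity
  have hsup := hk.trans (le_ciSup hbdd k)
  rw [dX, sub_zero, Real.le_sqrt (norm_nonneg _) ((sq_nonneg _).trans hsup)]
  exact hsup

lemma exists_admissible_isState_le_dX (N0 : Set E) {y : ℕ → E} (hy : ∀ k, y k ≠ 0) :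
    ∃ (X : ℕ → E) (Φ : ℕ → A →L[ℂ] ℂ), Admissible N0 X ∧ (∀ k, IsState (Φ k)) ∧
      ∀ k, ‖y k‖ / 2 ^ (k + 1) ≤ dX X Φ (y k) 0 := by
  choose Φ hΦ hΦy using fun k =>
    exists_isState_apply_eq_norm (inner_self_nonneg (x := y k)) (inner_self.not.mpr (hy k))
  have hy' (k : ℕ) : 0 < ‖y k‖ := norm_pos_iff.mpr (hy k)
  set X : ℕ → E := fun i => (((2 ^ (i + 1) * ‖y i‖)⁻¹ : ℝ) : ℂ) • y i
  have hXsq (i : ℕ) : ‖X i‖ ^ 2 = 4⁻¹ * 4⁻¹ ^ i := by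
    have : ‖X i‖ = (2 ^ (i + 1))⁻¹ := by
      simp only [X, norm_smul, Complex.norm_real, norm_inv, norm_mul, norm_pow, Real.norm_ofNat,
        norm_norm]
      field_simp [(hy' i).ne']
    rw [this, ← inv_pow, ← pow_mul, mul_comm, pow_mul, pow_succ']
    norm_num
  have hgeom : Summable fun i : ℕ => (4⁻¹ : ℝ) ^ i :=
    summable_geometric_of_lt_one (by norm_num) (by norm_num)
  have hX : Summable fun i => ‖X i‖ ^ 2 := by simpa only [hXsq] using hgeom.mul_left 4⁻¹
  have hX1 : ∑' i, ‖X i‖ ^ 2 ≤ 1 := by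
    simp only [hXsq, tsum_mul_left,
      tsum_geometric_of_lt_one (by norm_num : (0 : ℝ) ≤ 4⁻¹) (by norm_num)]
    norm_num
  refine ⟨X, Φ, admissible_of_tsum_norm_sq_le_one hX hX1, hΦ, fun k => ?_⟩
  have hval : ‖Φ k ⟪y k, X k⟫_A‖ = ‖y k‖ / 2 ^ (k + 1) := by
    rw [inner_smul_right_complex, map_smul, hΦy, ← norm_sq_eq_norm_inner_self, smul_eq_mul,
      ← Complex.ofReal_mul, Complex.norm_real, Real.norm_of_nonneg (by positivity)]
    field_simp [(hy' k).ne']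
  exact hval ▸ norm_apply_inner_le_dX (fun j => (hΦ j).2.le) hX (y k) k

theorem statement8_general (N0 : Submodule ℂ E) (Y : Set E)
    (h : ∀ (X : ℕ → E) (Φ : ℕ → A →L[ℂ] ℂ),
      Admissible (N0 : Set E) X → (∀ k, IsState (Φ k)) →
      ∃ C : ℝ, ∀ y ∈ Y, dX X Φ y 0 ≤ C) :
    ∃ C : ℝ, ∀ y ∈ Y, ‖y‖ ≤ C := by
  by_contra! hunbdd
  choose y hyY hy using fun k : ℕ => hunbdd (k * 2 ^ (k + 1))
  have hy0 (k : ℕ) : y k ≠ 0 := norm_pos_iff.mp (lt_of_le_of_lt (by positivity) (hy k))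
  obtain ⟨X, Φ, hX, hΦ, hdX⟩ := exists_admissible_isState_le_dX (N0 : Set E) hy0
  obtain ⟨C, hC⟩ := h X Φ hX hΦ
  obtain ⟨k, hk⟩ := exists_nat_gt C
  have hyk : (k : ℝ) < ‖y k‖ / 2 ^ (k + 1) := (lt_div_iff₀ (by positivity)).mpr (hy k)
  linarith [hdX k, hC (y k) (hyY k)]

/-- If `Y ⊆ N⁰` is bounded w.r.t. every seminorm `ν_{X,Φ}` coming from an `N⁰`-admissible
system of elements `X` and a sequence of states `Φ`, then `Y` is bounded in norm. -/
theorem statement8 (N0 : Submodule ℂ E) (Y : Set E) (hY : Y ⊆ N0)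
    (h : ∀ (X : ℕ → E) (Φ : ℕ → A →L[ℂ] ℂ),
      Admissible (N0 : Set E) X → (∀ k, IsState (Φ k)) →
      ∃ C : ℝ, ∀ y ∈ Y, dX X Φ y 0 ≤ C) :
    ∃ C : ℝ, ∀ y ∈ Y, ‖y‖ ≤ C :=
  statement8_general N0 Y h
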